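/- arXiv:2206.08996 — 2 statements merged into one kernel-verified Lean document; each statement's English description precedes it below -/
import Mathlib

section
/- Let (i,j) be a pair of distinct vertices with w_ij < w̄ and δ ∈ (0, w̄ − w_ij]. If z̃ᵀ(I+L)^{-1}v_ij = 0, then adding weight δ to edge (i,j) does not reduce polarization: P(z⁺) ≥ P(z). -/
open Matrix Finset

noncomputable def deg {n : ℕ} (W : Matrix (Fin n) (Fin n) ℝ) (i : Fin n) : ℝ := ∑ j, W i j

noncomputable def lap {n : ℕ} (W : Matrix (Fin n) (Fin n) ℝ) : Matrix (Fin n) (Fin n) ℝ :=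
  Matrix.diagonal (deg W) - W

noncomputable def mean {n : ℕ} (x : Fin n → ℝ) : ℝ := (∑ i, x i) / n

noncomputable def ctr {n : ℕ} (x : Fin n → ℝ) : Fin n → ℝ := fun i => x i - mean x

noncomputable def pol {n : ℕ} (x : Fin n → ℝ) : ℝ := ∑ i, (x i - mean x) ^ 2

def vij {n : ℕ} (i j : Fin n) : Fin n → ℝ :=
  fun k => (if k = i then (1 : ℝ) else 0) - (if k = j then (1 : ℝ) else 0)

/-! Writing `M = I + L`, the perturbed system is `M z⁺ + δ (vᵀz⁺) v = s`, so
`z⁺ = z + t • M⁻¹v` with `t = -δ vᵀz⁺`. Centring is linear and `z̃` sums to zero, so the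
hypothesis makes `z̃` orthogonal to the centred `M⁻¹v`; polarization is the squared norm of the
centred vector, hence `P(z⁺) = P(z) + P(t • M⁻¹v) ≥ P(z)`. Both `M` and `M + δ vvᵀ` are
invertible because a weighted Laplacian with nonnegative symmetric weights is positive
semidefinite. -/

lemma sum_ctr_eq_zero {n : ℕ} (x : Fin n → ℝ) : ∑ k, ctr x k = 0 := by
  rcases Nat.eq_zero_or_pos n with rfl | hn
  · simp
  · simp only [ctr, mean, sum_sub_distrib, sum_const, card_univ, Fintype.card_fin, nsmul_eq_mul]
    field_simp
    ring

lemma mean_add {n : ℕ} (x y : Fin n → ℝ) : mean (x + y) = mean x + mean y := by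
  simp only [mean, Pi.add_apply, sum_add_distrib, add_div]

lemma ctr_add {n : ℕ} (x y : Fin n → ℝ) : ctr (x + y) = ctr x + ctr y := by
  ext k
  simp only [ctr, mean_add, Pi.add_apply]
  ring

lemma ctr_dotProduct_ctr {n : ℕ} (x y : Fin n → ℝ) : ctr x ⬝ᵥ ctr y = ctr x ⬝ᵥ y := by
  have hshift : ctr y = y - mean y • 1 := by ext k; simp [ctr]
  rw [hshift, dotProduct_sub, dotProduct_smul, dotProduct_one, sum_ctr_eq_zero, smul_zero,
    sub_zero]

lemma pol_eq_ctr_dotProduct_ctr {n : ℕ} (x : Fin n → ℝ) : pol x = ctr x ⬝ᵥ ctr x := by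
  simp only [pol, ctr, dotProduct, sq]

lemma pol_nonneg {n : ℕ} (x : Fin n → ℝ) : 0 ≤ pol x :=
  sum_nonneg fun _ _ => sq_nonneg _

lemma pol_add_of_ctr_dotProduct_eq_zero {n : ℕ} {x y : Fin n → ℝ} (h : ctr x ⬝ᵥ y = 0) :
    pol (x + y) = pol x + pol y := by
  have hxy : ctr x ⬝ᵥ ctr y = 0 := by rw [ctr_dotProduct_ctr, h]
  have hyx : ctr y ⬝ᵥ ctr x = 0 := by rw [dotProduct_comm, hxy]
  simp only [pol_eq_ctr_dotProduct_ctr, ctr_add, add_dotProduct, dotProduct_add, hxy, hyx,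
    add_zero, zero_add]

lemma two_mul_dotProduct_lap_mulVec {n : ℕ} {W : Matrix (Fin n) (Fin n) ℝ} (hW : W.IsSymm)
    (x : Fin n → ℝ) : 2 * (x ⬝ᵥ lap W *ᵥ x) = ∑ a, ∑ b, W a b * (x a - x b) ^ 2 := by
  have hrow : ∀ a, (lap W *ᵥ x) a = ∑ b, W a b * (x a - x b) := fun a => by
    rw [lap, sub_mulVec, Pi.sub_apply, mulVec_diagonal, deg, sum_mul]
    simp only [mulVec, dotProduct, mul_sub, sum_sub_distrib]
  have hquad : x ⬝ᵥ lap W *ᵥ x = ∑ a, ∑ b, W a b * x a * (x a - x b) :=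
    sum_congr rfl fun a _ => by rw [hrow, mul_sum]; exact sum_congr rfl fun b _ => by ring
  have hswap : x ⬝ᵥ lap W *ᵥ x = ∑ a, ∑ b, W a b * x b * (x b - x a) := by
    rw [hquad, sum_comm]
    exact sum_congr rfl fun a _ => sum_congr rfl fun b _ => by rw [hW.apply b a]
  rw [two_mul]
  nth_rw 1 [hquad]
  rw [hswap, ← sum_add_distrib]
  exact sum_congr rfl fun a _ => by rw [← sum_add_distrib]; exact sum_congr rfl fun b _ => by ring

lemma posSemidef_lap {n : ℕ} {W : Matrix (Fin n) (Fin n) ℝ} (hW : W.IsSymm)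
    (hW0 : ∀ a b, 0 ≤ W a b) : (lap W).PosSemidef := by
  refine .of_dotProduct_mulVec_nonneg ?_ fun x => ?_
  · simpa [lap] using (isSymm_diagonal (deg W)).sub hW
  · have hsum : 0 ≤ ∑ a, ∑ b, W a b * (x a - x b) ^ 2 :=
      sum_nonneg fun a _ => sum_nonneg fun b _ => mul_nonneg (hW0 a b) (sq_nonneg _)
    rw [star_trivial]
    linarith [two_mul_dotProduct_lap_mulVec hW x]

lemma inv_add_vecMulVec_mulVec {ι K : Type*} [Fintype ι] [DecidableEq ι] [Field K]
    {A : Matrix ι ι K} (u v s : ι → K) (hA : IsUnit A) (hB : IsUnit (A + vecMulVec u v)) :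
    (A + vecMulVec u v)⁻¹ *ᵥ s = A⁻¹ *ᵥ s - (v ⬝ᵥ (A + vecMulVec u v)⁻¹ *ᵥ s) • A⁻¹ *ᵥ u := by
  set y := (A + vecMulVec u v)⁻¹ *ᵥ s
  have hy : A *ᵥ y + (v ⬝ᵥ y) • u = s := by
    rw [← op_smul_eq_smul, ← vecMulVec_mulVec, ← add_mulVec, mulVec_mulVec,
      mul_nonsing_inv _ ((isUnit_iff_isUnit_det _).1 hB), one_mulVec]
  rw [← hy, mulVec_add, mulVec_mulVec, nonsing_inv_mul _ ((isUnit_iff_isUnit_det _).1 hA),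
    one_mulVec, mulVec_smul, add_sub_cancel_right]

theorem stmt_9_general {n : ℕ} (wbar : ℝ)
    (W : Matrix (Fin n) (Fin n) ℝ)
    (hsymm : W.IsSymm)
    (hW : ∀ i j, 0 ≤ W i j ∧ W i j ≤ wbar)
    (s : Fin n → ℝ) (i j : Fin n)
    (δ : ℝ) (hδ0 : 0 < δ)
    (z zp : Fin n → ℝ)
    (hz : z = (1 + lap W)⁻¹ *ᵥ s)
    (hzp : zp = (1 + (lap W + δ • vecMulVec (vij i j) (vij i j)))⁻¹ *ᵥ s)
    (horth : ctr z ⬝ᵥ ((1 + lap W)⁻¹ *ᵥ vij i j) = 0) :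
    pol z ≤ pol zp := by
  set v := vij i j
  have hL : (lap W).PosSemidef := posSemidef_lap hsymm fun a b => (hW a b).1
  have hM : (1 + lap W).PosDef := PosDef.one.add_posSemidef hL
  have hvv : (vecMulVec (δ • v) v).PosSemidef := by
    simpa [smul_vecMulVec] using (posSemidef_vecMulVec_self_star v).smul hδ0.le
  rw [← add_assoc, ← smul_vecMulVec] at hzp
  rw [hzp, inv_add_vecMulVec_mulVec _ _ _ hM.isUnit (hM.add_posSemidef hvv).isUnit, ← hz,
    sub_eq_add_neg, pol_add_of_ctr_dotProduct_eq_zero]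
  · exact le_add_of_nonneg_right (pol_nonneg _)
  · rw [← neg_smul, mulVec_smul, dotProduct_smul, dotProduct_smul, horth, smul_zero, smul_zero]

/-- if `z̃ᵀ(I+L)⁻¹v_ij = 0`, then adding weight `δ` to the edge `(i,j)`
does not reduce polarization. -/
theorem stmt_9 {n : ℕ} (hn : 2 ≤ n) (wbar : ℝ) (hwbar : 0 < wbar)
    (W : Matrix (Fin n) (Fin n) ℝ)
    (hsymm : W.IsSymm) (hdiag : ∀ i, W i i = 0)
    (hW : ∀ i j, 0 ≤ W i j ∧ W i j ≤ wbar)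
    (s : Fin n → ℝ) (i j : Fin n) (hij : i ≠ j)
    (hwij : W i j < wbar)
    (δ : ℝ) (hδ0 : 0 < δ) (hδ : δ ≤ wbar - W i j)
    (z zp : Fin n → ℝ)
    (hz : z = (1 + lap W)⁻¹ *ᵥ s)
    (hzp : zp = (1 + (lap W + δ • vecMulVec (vij i j) (vij i j)))⁻¹ *ᵥ s)
    (horth : ctr z ⬝ᵥ ((1 + lap W)⁻¹ *ᵥ vij i j) = 0) :
    pol z ≤ pol zp :=
  stmt_9_general wbar W hsymm hW s i j δ hδ0 z zp hz hzp horth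
end

section
/- Let d_min and d_max be the minimum and maximum weighted degrees of the graph G, and let h_G be its isoperimetric number. Then the second smallest eigenvalue of the combinatorial Laplacian satisfies (1/2)·d_min·h_G² ≤ λ₂(L) ≤ 2·d_max·h_G. -/
open Matrix Finset

noncomputable def cheeger {n : ℕ} (W : Matrix (Fin n) (Fin n) ℝ) : ℝ :=
  sInf { r : ℝ | ∃ X : Finset (Fin n), X.Nonempty ∧ X ≠ Finset.univ ∧
    r = (∑ i ∈ X, ∑ j ∈ Xᶜ, W i j) /
      min (∑ i ∈ X, deg W i) (∑ j ∈ Xᶜ, deg W j) }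

/-!
For the upper bound, let `X` be an optimal cut, `p = |X|`, `q = |Xᶜ|`. The vector
`q 𝟙_X - p 𝟙_Xᶜ` sums to zero and has Rayleigh quotient `(p + q) cut X / (p q)
≤ 2 cut X / min(p, q)`, while `min(vol X, vol Xᶜ) ≤ d_max min(p, q)`.

For the lower bound, take an eigenvector `f` of `λ₂` summing to zero, with sign chosen so that
`{f > 0}` has at most half of the volume, and let `g = f⁺`. Then `gᵀLg ≤ λ₂ ‖g‖²`, every level
set of `g` is a cut with `h · vol ≤ cut`, so the co-area formula gives
`2 h Σ dᵢ gᵢ² ≤ Σ wᵢⱼ |gᵢ² - gⱼ²|`, and Cauchy–Schwarz bounds the square of the right side by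
`8 (gᵀLg) Σ dᵢ gᵢ²`. Since `Σ dᵢ gᵢ² ≥ d_min ‖g‖²`, this gives `d_min h² ≤ 2 λ₂`.
-/

namespace Matrix.IsHermitian

variable {ι : Type*} [Fintype ι] [DecidableEq ι] {A : Matrix ι ι ℝ} (hA : A.IsHermitian)

lemma dotProduct_eq_sum_eigenvectorBasis (x y : ι → ℝ) :
    x ⬝ᵥ y = ∑ k, (x ⬝ᵥ ⇑(hA.eigenvectorBasis k)) * (⇑(hA.eigenvectorBasis k) ⬝ᵥ y) := by
  have := (hA.eigenvectorBasis).sum_inner_mul_inner (WithLp.toLp 2 x) (WithLp.toLp 2 y)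
  simp only [EuclideanSpace.inner_eq_star_dotProduct, star_trivial] at this
  rw [dotProduct_comm, ← this]
  exact Finset.sum_congr rfl fun k _ => by rw [dotProduct_comm x, dotProduct_comm _ y, mul_comm]

lemma eigenvectorBasis_dotProduct_eigenvectorBasis (k l : ι) :
    ⇑(hA.eigenvectorBasis k) ⬝ᵥ ⇑(hA.eigenvectorBasis l) = if k = l then 1 else 0 := by
  rw [← orthonormal_iff_ite.mp hA.eigenvectorBasis.orthonormal k l,
    EuclideanSpace.inner_eq_star_dotProduct, star_trivial, dotProduct_comm]

lemma eigenvectorBasis_dotProduct_mulVec (k : ι) (y : ι → ℝ) :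
    ⇑(hA.eigenvectorBasis k) ⬝ᵥ (A *ᵥ y) = hA.eigenvalues k * (⇑(hA.eigenvectorBasis k) ⬝ᵥ y) := by
  have hT : Aᵀ = A := by simpa [conjTranspose_eq_transpose_of_trivial] using hA.eq
  rw [dotProduct_mulVec, ← mulVec_transpose, hT, hA.mulVec_eigenvectorBasis, smul_dotProduct,
    smul_eq_mul]

lemma dotProduct_mulVec_eq_sum (x : ι → ℝ) :
    x ⬝ᵥ (A *ᵥ x) = ∑ k, hA.eigenvalues k * (⇑(hA.eigenvectorBasis k) ⬝ᵥ x) ^ 2 := by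
  rw [hA.dotProduct_eq_sum_eigenvectorBasis]
  exact Finset.sum_congr rfl fun k _ => by
    rw [hA.eigenvectorBasis_dotProduct_mulVec, dotProduct_comm]; ring

lemma dotProduct_self_eq_sum (x : ι → ℝ) : x ⬝ᵥ x = ∑ k, (⇑(hA.eigenvectorBasis k) ⬝ᵥ x) ^ 2 := by
  rw [hA.dotProduct_eq_sum_eigenvectorBasis]
  exact Finset.sum_congr rfl fun k _ => by rw [dotProduct_comm]; ring

lemma le_dotProduct_mulVec_of_eigenvectorBasis_dotProduct_eq_zero {k₀ : ι} {c : ℝ}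
    (hc : ∀ k ≠ k₀, c ≤ hA.eigenvalues k) {x : ι → ℝ} (hx : ⇑(hA.eigenvectorBasis k₀) ⬝ᵥ x = 0) :
    c * (x ⬝ᵥ x) ≤ x ⬝ᵥ (A *ᵥ x) := by
  rw [hA.dotProduct_mulVec_eq_sum, hA.dotProduct_self_eq_sum, Finset.mul_sum]
  refine Finset.sum_le_sum fun k _ => ?_
  rcases eq_or_ne k k₀ with rfl | hk
  · simp [hx]
  · exact mul_le_mul_of_nonneg_right (hc k hk) (sq_nonneg _)

lemma eigenvalues_mul_sum_eigenvectorBasis_eq_zero (hA1 : A *ᵥ 1 = 0) (k : ι) :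
    hA.eigenvalues k * ∑ i, hA.eigenvectorBasis k i = 0 := by
  rw [← dotProduct_one, ← hA.eigenvectorBasis_dotProduct_mulVec, hA1, dotProduct_zero]

lemma le_dotProduct_mulVec_of_sum_eq_zero (hA1 : A *ᵥ 1 = 0)
    (hpsd : ∀ x, 0 ≤ x ⬝ᵥ (A *ᵥ x)) {k₀ : ι} {c : ℝ} (hc : ∀ k ≠ k₀, c ≤ hA.eigenvalues k)
    {x : ι → ℝ} (hx : ∑ i, x i = 0) :
    c * (x ⬝ᵥ x) ≤ x ⬝ᵥ (A *ᵥ x) := by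
  rcases le_or_gt c 0 with hc0 | hc0
  · exact (mul_nonpos_of_nonpos_of_nonneg hc0 (dotProduct_self_star_nonneg x)).trans (hpsd x)
  refine hA.le_dotProduct_mulVec_of_eigenvectorBasis_dotProduct_eq_zero hc ?_
  -- `1` is orthogonal to every eigenvector whose eigenvalue is positive, so it is a multiple of
  -- the `k₀`-th one, which is therefore orthogonal to `x`
  have h1 : ∀ k ≠ k₀, (1 : ι → ℝ) ⬝ᵥ ⇑(hA.eigenvectorBasis k) = 0 := fun k hk => by
    rw [one_dotProduct]
    exact (mul_eq_zero.mp (hA.eigenvalues_mul_sum_eigenvectorBasis_eq_zero hA1 k)).resolve_left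
      (hc0.trans_le (hc k hk)).ne'
  have hone : ∀ y : ι → ℝ, 1 ⬝ᵥ y =
      (1 ⬝ᵥ ⇑(hA.eigenvectorBasis k₀)) * (⇑(hA.eigenvectorBasis k₀) ⬝ᵥ y) := fun y => by
    rw [hA.dotProduct_eq_sum_eigenvectorBasis,
      Finset.sum_eq_single k₀ (fun k _ hk => by rw [h1 k hk, zero_mul]) (by simp)]
  have hcard : (1 : ι → ℝ) ⬝ᵥ 1 ≠ 0 := by
    have : Nonempty ι := ⟨k₀⟩
    rw [one_dotProduct_one]; exact_mod_cast Fintype.card_ne_zero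
  have hx' := hone x
  rw [one_dotProduct, hx] at hx'
  refine (mul_eq_zero.mp hx'.symm).resolve_left fun h => hcard ?_
  rw [hone, h, zero_mul]

lemma exists_sum_eq_zero_and_mulVec_eq_smul (hA1 : A *ᵥ 1 = 0)
    (hpsd : ∀ x, 0 ≤ x ⬝ᵥ (A *ᵥ x)) {k₀ k₁ : ι} (hne : k₀ ≠ k₁)
    (hle : hA.eigenvalues k₀ ≤ hA.eigenvalues k₁) :
    ∃ f : ι → ℝ, f ≠ 0 ∧ ∑ i, f i = 0 ∧ A *ᵥ f = hA.eigenvalues k₁ • f := by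
  set v₀ := ⇑(hA.eigenvectorBasis k₀)
  set v₁ := ⇑(hA.eigenvectorBasis k₁)
  have hv₀₀ : v₀ ⬝ᵥ v₀ = 1 := by simp [v₀, hA.eigenvectorBasis_dotProduct_eigenvectorBasis]
  have hv₀₁ : v₀ ⬝ᵥ v₁ = 0 := by
    simp [v₀, v₁, hA.eigenvectorBasis_dotProduct_eigenvectorBasis, hne]
  have hv₁₁ : v₁ ⬝ᵥ v₁ = 1 := by simp [v₁, hA.eigenvectorBasis_dotProduct_eigenvectorBasis]
  by_cases h₁ : ∑ i, v₁ i = 0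
  · exact ⟨v₁, fun h => by simp [h] at hv₁₁, h₁, hA.mulVec_eigenvectorBasis k₁⟩
  -- otherwise both eigenvalues vanish, and a combination of `v₀` and `v₁` does the job
  have he₁ : hA.eigenvalues k₁ = 0 :=
    (mul_eq_zero.mp (hA.eigenvalues_mul_sum_eigenvectorBasis_eq_zero hA1 k₁)).resolve_right h₁
  have he₀ : hA.eigenvalues k₀ = 0 := by
    have := hpsd v₀
    rw [hA.eigenvectorBasis_dotProduct_mulVec, hv₀₀] at this
    linarith
  refine ⟨(∑ i, v₁ i) • v₀ - (∑ i, v₀ i) • v₁, fun h => h₁ ?_, ?_, ?_⟩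
  · have := congrArg (v₀ ⬝ᵥ ·) h
    simpa [dotProduct_sub, hv₀₀, hv₀₁] using this
  · simp only [Pi.sub_apply, Pi.smul_apply, smul_eq_mul, Finset.sum_sub_distrib, ← Finset.mul_sum]
    ring
  · rw [mulVec_sub, mulVec_smul, mulVec_smul, hA.mulVec_eigenvectorBasis,
      hA.mulVec_eigenvectorBasis, he₀, he₁]
    simp

end Matrix.IsHermitian

noncomputable def cut {n : ℕ} (W : Matrix (Fin n) (Fin n) ℝ) (X : Finset (Fin n)) : ℝ :=
  ∑ i ∈ X, ∑ j ∈ Xᶜ, W i j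

noncomputable def vol {n : ℕ} (W : Matrix (Fin n) (Fin n) ℝ) (X : Finset (Fin n)) : ℝ :=
  ∑ i ∈ X, deg W i

lemma Finset.nonempty_compl {α : Type*} [Fintype α] [DecidableEq α] {s : Finset α} :
    sᶜ.Nonempty ↔ s ≠ univ := by
  rw [Finset.nonempty_iff_ne_empty, Ne, Finset.compl_eq_empty_iff]

section Graph

variable {n : ℕ} {W : Matrix (Fin n) (Fin n) ℝ}

lemma sum_sum_mul_eq_sum_deg_mul (hsymm : W.IsSymm) (y : Fin n → ℝ) :
    ∑ i, ∑ j, W i j * y j = ∑ j, deg W j * y j := by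
  rw [Finset.sum_comm]
  exact Finset.sum_congr rfl fun j _ => by
    rw [deg, Finset.sum_mul]; exact Finset.sum_congr rfl fun i _ => by rw [hsymm.apply]

lemma lap_mulVec_apply (x : Fin n → ℝ) (i : Fin n) :
    (lap W *ᵥ x) i = deg W i * x i - ∑ j, W i j * x j := by
  simp only [lap, sub_mulVec, Pi.sub_apply, mulVec_diagonal]; rfl

lemma lap_mulVec_one : lap W *ᵥ 1 = 0 := by
  ext i; simp [lap_mulVec_apply, deg]

lemma dotProduct_lap_mulVec (u x : Fin n → ℝ) :
    u ⬝ᵥ (lap W *ᵥ x) = ∑ i, deg W i * u i * x i - ∑ i, ∑ j, W i j * u i * x j := by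
  simp only [dotProduct, lap_mulVec_apply, mul_sub, Finset.sum_sub_distrib, Finset.mul_sum]
  congr 1 <;> refine Finset.sum_congr rfl fun i _ => ?_
  · ring
  · exact Finset.sum_congr rfl fun j _ => by ring

lemma two_mul_dotProduct_lap_mulVec_self (hsymm : W.IsSymm) (x : Fin n → ℝ) :
    2 * (x ⬝ᵥ (lap W *ᵥ x)) = ∑ i, ∑ j, W i j * (x i - x j) ^ 2 := by
  have hleft : ∑ i, ∑ j, W i j * x i ^ 2 = ∑ i, deg W i * x i ^ 2 := by
    simp only [deg, Finset.sum_mul]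
  calc 2 * (x ⬝ᵥ (lap W *ᵥ x))
      = ∑ i, ∑ j, W i j * x i ^ 2 + ∑ i, ∑ j, W i j * x j ^ 2
        - 2 * ∑ i, ∑ j, W i j * x i * x j := by
        rw [dotProduct_lap_mulVec, hleft, sum_sum_mul_eq_sum_deg_mul hsymm]
        simp only [sq, mul_assoc]; ring
    _ = ∑ i, ∑ j, W i j * (x i - x j) ^ 2 := by
        simp only [← Finset.sum_add_distrib, Finset.mul_sum, ← Finset.sum_sub_distrib]
        exact Finset.sum_congr rfl fun i _ => Finset.sum_congr rfl fun j _ => by ring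

lemma dotProduct_lap_mulVec_nonneg (hsymm : W.IsSymm) (hw : ∀ i j, 0 ≤ W i j)
    (x : Fin n → ℝ) : 0 ≤ x ⬝ᵥ (lap W *ᵥ x) := by
  have := two_mul_dotProduct_lap_mulVec_self hsymm x
  have : 0 ≤ ∑ i, ∑ j, W i j * (x i - x j) ^ 2 :=
    Finset.sum_nonneg fun i _ => Finset.sum_nonneg fun j _ => mul_nonneg (hw i j) (sq_nonneg _)
  linarith

lemma dotProduct_lap_mulVec_nonpos_of_mul_eq_zero (hw : ∀ i j, 0 ≤ W i j) {u x : Fin n → ℝ}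
    (hu : ∀ i, 0 ≤ u i) (hx : ∀ i, 0 ≤ x i) (hux : ∀ i, u i * x i = 0) :
    u ⬝ᵥ (lap W *ᵥ x) ≤ 0 := by
  rw [dotProduct_lap_mulVec]
  simp only [mul_assoc, hux, mul_zero, Finset.sum_const_zero, zero_sub, neg_nonpos]
  exact Finset.sum_nonneg fun i _ => Finset.sum_nonneg fun j _ =>
    mul_nonneg (hw i j) (mul_nonneg (hu i) (hx j))

lemma deg_nonneg (hw : ∀ i j, 0 ≤ W i j) (i : Fin n) : 0 ≤ deg W i :=
  Finset.sum_nonneg fun j _ => hw i j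

lemma vol_nonneg (hw : ∀ i j, 0 ≤ W i j) (X : Finset (Fin n)) : 0 ≤ vol W X :=
  Finset.sum_nonneg fun i _ => deg_nonneg hw i

lemma vol_mono (hw : ∀ i j, 0 ≤ W i j) {X Y : Finset (Fin n)} (h : X ⊆ Y) :
    vol W X ≤ vol W Y :=
  Finset.sum_le_sum_of_subset_of_nonneg h fun i _ _ => deg_nonneg hw i

lemma cut_nonneg (hw : ∀ i j, 0 ≤ W i j) (X : Finset (Fin n)) : 0 ≤ cut W X :=
  Finset.sum_nonneg fun i _ => Finset.sum_nonneg fun j _ => hw i j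

lemma cut_le_vol (hw : ∀ i j, 0 ≤ W i j) (X : Finset (Fin n)) : cut W X ≤ vol W X :=
  Finset.sum_le_sum fun i _ =>
    Finset.sum_le_sum_of_subset_of_nonneg (Finset.subset_univ _) fun j _ _ => hw i j

lemma cut_compl (hsymm : W.IsSymm) (X : Finset (Fin n)) : cut W Xᶜ = cut W X := by
  rw [cut, cut, compl_compl]
  refine Finset.sum_comm.trans ?_
  exact Finset.sum_congr rfl fun i _ => Finset.sum_congr rfl fun j _ => hsymm.apply i j

lemma vol_le_card_mul_iSup_deg (X : Finset (Fin n)) :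
    vol W X ≤ X.card * ⨆ i, deg W i := by
  rw [← nsmul_eq_mul, ← Finset.sum_const]
  exact Finset.sum_le_sum fun i _ => le_ciSup (Set.finite_range (deg W)).bddAbove i

lemma sum_sum_mul_sq_ite_sub (hsymm : W.IsSymm) (X : Finset (Fin n)) (a b : ℝ) :
    ∑ i, ∑ j, W i j * ((if i ∈ X then a else b) - (if j ∈ X then a else b)) ^ 2
      = 2 * (a - b) ^ 2 * cut W X := by
  set x : Fin n → ℝ := fun i => if i ∈ X then a else b
  have hX : ∀ i ∈ X, ∑ j, W i j * (x i - x j) ^ 2 = (a - b) ^ 2 * ∑ j ∈ Xᶜ, W i j := by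
    intro i hi
    rw [← Finset.sum_add_sum_compl X, Finset.sum_eq_zero fun j hj => by simp [x, hi, hj],
      zero_add, Finset.mul_sum]
    exact Finset.sum_congr rfl fun j hj => by simp [x, hi, Finset.mem_compl.mp hj]; ring
  have hXc : ∀ i ∈ Xᶜ, ∑ j, W i j * (x i - x j) ^ 2 = (a - b) ^ 2 * ∑ j ∈ X, W i j := by
    intro i hi
    rw [← Finset.sum_add_sum_compl X,
      Finset.sum_eq_zero (s := Xᶜ) fun j hj => by simp [x, Finset.mem_compl.mp hi,
        Finset.mem_compl.mp hj], add_zero, Finset.mul_sum]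
    exact Finset.sum_congr rfl fun j hj => by simp [x, Finset.mem_compl.mp hi, hj]; ring
  have hcut : ∑ i ∈ Xᶜ, ∑ j ∈ X, W i j = cut W X := by
    rw [← cut_compl hsymm, cut, compl_compl]
  rw [← Finset.sum_add_sum_compl X, Finset.sum_congr rfl hX, Finset.sum_congr rfl hXc,
    ← Finset.mul_sum, ← Finset.mul_sum, hcut, ← cut]
  ring

lemma cheeger_nonneg (hw : ∀ i j, 0 ≤ W i j) : 0 ≤ cheeger W := by
  refine Real.sInf_nonneg ?_
  rintro r ⟨X, -, -, rfl⟩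
  exact div_nonneg (cut_nonneg hw X) (le_min (vol_nonneg hw X) (vol_nonneg hw Xᶜ))

lemma cheeger_le (hw : ∀ i j, 0 ≤ W i j) {X : Finset (Fin n)} (hX : X.Nonempty)
    (hXu : X ≠ Finset.univ) : cheeger W ≤ cut W X / min (vol W X) (vol W Xᶜ) := by
  refine csInf_le ⟨0, ?_⟩ ⟨X, hX, hXu, rfl⟩
  rintro r ⟨Y, -, -, rfl⟩
  exact div_nonneg (cut_nonneg hw Y) (le_min (vol_nonneg hw Y) (vol_nonneg hw Yᶜ))

lemma cheeger_mul_vol_le_cut (hw : ∀ i j, 0 ≤ W i j) {X : Finset (Fin n)}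
    (hXu : X ≠ Finset.univ) (hvol : vol W X ≤ vol W Xᶜ) : cheeger W * vol W X ≤ cut W X := by
  rcases X.eq_empty_or_nonempty with rfl | hX
  · simp [vol, cut]
  rcases (vol_nonneg hw X).eq_or_lt with h0 | h0
  · rw [← h0, mul_zero]; exact cut_nonneg hw X
  have := cheeger_le hw hX hXu
  rwa [min_eq_left hvol, le_div_iff₀ h0] at this

lemma exists_cheeger_eq (hn : 2 ≤ n) : ∃ X : Finset (Fin n), X.Nonempty ∧ X ≠ Finset.univ ∧
    cheeger W = cut W X / min (vol W X) (vol W Xᶜ) := by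
  set S := { r : ℝ | ∃ X : Finset (Fin n), X.Nonempty ∧ X ≠ Finset.univ ∧
    r = cut W X / min (vol W X) (vol W Xᶜ) }
  have hne : S.Nonempty := by
    refine ⟨_, {⟨0, by omega⟩}, Finset.singleton_nonempty _, fun h => ?_, rfl⟩
    have h1 : (⟨1, hn⟩ : Fin n) ∈ ({⟨0, by omega⟩} : Finset (Fin n)) := h ▸ Finset.mem_univ _
    simp at h1
  have hfin : S.Finite := (Set.finite_range fun X => cut W X / min (vol W X) (vol W Xᶜ)).subset
    fun r ⟨X, _, _, hr⟩ => ⟨X, hr.symm⟩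
  exact hne.csInf_mem hfin

lemma mul_min_card_le_two_mul_cut (hsymm : W.IsSymm) (hw : ∀ i j, 0 ≤ W i j) {c : ℝ}
    (hc : ∀ x : Fin n → ℝ, ∑ i, x i = 0 → c * (x ⬝ᵥ x) ≤ x ⬝ᵥ (lap W *ᵥ x))
    {X : Finset (Fin n)} (hX : X.Nonempty) (hXc : Xᶜ.Nonempty) :
    c * min (X.card : ℝ) Xᶜ.card ≤ 2 * cut W X := by
  set p : ℝ := (X.card : ℝ)
  set q : ℝ := (Xᶜ.card : ℝ)
  have hp : 0 < p := by simpa [p] using hX.card_pos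
  have hq : 0 < q := by simpa [q] using hXc.card_pos
  set x : Fin n → ℝ := fun i => if i ∈ X then q else -p
  have hsum : ∑ i, x i = 0 := by
    simp [x, Finset.sum_ite, Finset.filter_not, ← Finset.compl_eq_univ_sdiff, p, q]; ring
  have hxx : x ⬝ᵥ x = p * q * (p + q) := by
    simp [x, dotProduct, apply_ite₂, Finset.sum_ite, Finset.filter_not,
      ← Finset.compl_eq_univ_sdiff, p, q]; ring
  have hxLx : x ⬝ᵥ (lap W *ᵥ x) = (p + q) ^ 2 * cut W X := by
    have := two_mul_dotProduct_lap_mulVec_self hsymm x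
    rw [sum_sum_mul_sq_ite_sub hsymm] at this
    linarith
  have h := hc x hsum
  rw [hxx, hxLx] at h
  have hpq : c * (p * q) ≤ (p + q) * cut W X :=
    le_of_mul_le_mul_right (by linarith) (by positivity : 0 < p + q)
  have hcut := cut_nonneg hw X
  rcases le_total p q with h | h
  · rw [min_eq_left h]
    exact le_of_mul_le_mul_right (by nlinarith) hq
  · rw [min_eq_right h]
    exact le_of_mul_le_mul_right (by nlinarith) hp

lemma le_two_mul_iSup_deg_mul_cheeger (hsymm : W.IsSymm) (hw : ∀ i j, 0 ≤ W i j) (hn : 2 ≤ n)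
    {c : ℝ} (hc : ∀ x : Fin n → ℝ, ∑ i, x i = 0 → c * (x ⬝ᵥ x) ≤ x ⬝ᵥ (lap W *ᵥ x)) :
    c ≤ 2 * (⨆ i, deg W i) * cheeger W := by
  obtain ⟨X, hX, hXu, hX_eq⟩ := exists_cheeger_eq (W := W) hn
  have hXc := Finset.nonempty_compl.mpr hXu
  have hcX := mul_min_card_le_two_mul_cut hsymm hw hc hX hXc
  have hdmax : 0 ≤ ⨆ i, deg W i :=
    le_ciSup_of_le (Set.finite_range (deg W)).bddAbove ⟨0, by omega⟩ (deg_nonneg hw _)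
  have hmin : min (vol W X) (vol W Xᶜ) ≤ (⨆ i, deg W i) * min (X.card : ℝ) Xᶜ.card := by
    rw [mul_min_of_nonneg _ _ hdmax, mul_comm _ (X.card : ℝ), mul_comm _ (Xᶜ.card : ℝ)]
    exact min_le_min (vol_le_card_mul_iSup_deg X) (vol_le_card_mul_iSup_deg Xᶜ)
  rcases le_or_gt c 0 with hc0 | hc0
  · exact hc0.trans (by have := cheeger_nonneg (W := W) hw; positivity)
  rw [hX_eq]
  rcases (le_min (vol_nonneg hw X) (vol_nonneg hw Xᶜ)).eq_or_lt with h0 | h0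
  · -- `cheeger W` is the junk value `cut / 0 = 0`, but then the cut vanishes too
    have : cut W X ≤ 0 := h0 ▸ le_min (cut_le_vol hw X) (cut_compl hsymm X ▸ cut_le_vol hw Xᶜ)
    have hm : (0 : ℝ) < min (X.card : ℝ) Xᶜ.card := by
      simpa using And.intro hX.card_pos hXc.card_pos
    nlinarith
  rw [mul_div_assoc', le_div_iff₀ h0]
  calc c * min (vol W X) (vol W Xᶜ) ≤ c * ((⨆ i, deg W i) * min (X.card : ℝ) Xᶜ.card) := by
        gcongr
    _ = (⨆ i, deg W i) * (c * min (X.card : ℝ) Xᶜ.card) := by ring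
    _ ≤ (⨆ i, deg W i) * (2 * cut W X) := by gcongr
    _ = 2 * (⨆ i, deg W i) * cut W X := by ring

lemma sum_sum_mul_abs_sub_ite_add (hsymm : W.IsSymm) (T : Finset (Fin n)) {m : ℝ} (hm : 0 ≤ m)
    {ψ : Fin n → ℝ} (hψ : ∀ i, 0 ≤ ψ i) (hψT : ∀ i ∉ T, ψ i = 0) :
    ∑ i, ∑ j, W i j * |((if i ∈ T then m else 0) + ψ i) - ((if j ∈ T then m else 0) + ψ j)|
      = 2 * m * cut W T + ∑ i, ∑ j, W i j * |ψ i - ψ j| := by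
  have habs : ∀ i j, |((if i ∈ T then m else 0) + ψ i) - ((if j ∈ T then m else 0) + ψ j)|
      = m * ((if i ∈ T then 1 else 0) - (if j ∈ T then 1 else 0)) ^ 2 + |ψ i - ψ j| := by
    intro i j
    by_cases hi : i ∈ T <;> by_cases hj : j ∈ T
    · simp [hi, hj]
    · simp only [hi, hj, if_true, if_false, hψT j hj, add_zero, sub_zero]
      rw [abs_of_nonneg (by linarith [hψ i]), abs_of_nonneg (hψ i)]
      ring
    · simp only [hi, hj, if_true, if_false, hψT i hi, add_zero, zero_sub, abs_neg]
      rw [abs_of_nonneg (by linarith [hψ j]), abs_of_nonneg (hψ j)]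
      ring
    · simp [hi, hj, hψT i hi, hψT j hj]
  have hcross := sum_sum_mul_sq_ite_sub hsymm T 1 0
  simp only [habs, mul_add, Finset.sum_add_distrib, mul_left_comm _ m, ← Finset.mul_sum,
    hcross]
  ring

lemma two_mul_sum_deg_mul_le_sum_sum_mul_abs_sub (hsymm : W.IsSymm) {c : ℝ} (φ : Fin n → ℝ)
    (hφ : ∀ i, 0 ≤ φ i) (hcut : ∀ T ⊆ univ.filter (0 < φ ·), c * vol W T ≤ cut W T) :
    2 * c * ∑ i, deg W i * φ i ≤ ∑ i, ∑ j, W i j * |φ i - φ j| := by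
  induction h : (univ.filter (0 < φ ·)).card using Nat.strong_induction_on generalizing φ with
  | _ k ih =>
  set T := univ.filter (0 < φ ·)
  rcases T.eq_empty_or_nonempty with hT | hT
  · have : φ = 0 := funext fun i =>
      le_antisymm (not_lt.mp (Finset.filter_eq_empty_iff.mp hT (mem_univ i))) (hφ i)
    simp [this]
  -- peel off the lowest positive level `m` of `φ`: `φ = m 𝟙_T + ψ` with `ψ` supported in
  -- a smaller set
  obtain ⟨i₀, hi₀, hmin⟩ := T.exists_min_image φ hT
  set m := φ i₀
  have hm : 0 < m := (Finset.mem_filter.mp hi₀).2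
  set ψ : Fin n → ℝ := fun i => if i ∈ T then φ i - m else 0
  have hψ : ∀ i, 0 ≤ ψ i := fun i => by
    by_cases hi : i ∈ T
    · simpa [ψ, hi] using hmin i hi
    · simp [ψ, hi]
  have hψT : ∀ i ∉ T, ψ i = 0 := fun i hi => by simp [ψ, hi]
  have hφ_eq : φ = fun i => (if i ∈ T then m else 0) + ψ i := funext fun i => by
    by_cases hi : i ∈ T
    · simp [ψ, hi]
    · simpa [ψ, hi] using le_antisymm (by simpa [T] using hi) (hφ i)
  have hsub : univ.filter (0 < ψ ·) ⊂ T := by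
    have hsub : univ.filter (0 < ψ ·) ⊆ T := fun i hi => by
      by_contra hiT
      simp [hψT i hiT] at hi
    refine (Finset.ssubset_iff_of_subset hsub).mpr ⟨i₀, hi₀, ?_⟩
    simp [ψ, hi₀, m]
  have ih' := ih _ (h ▸ Finset.card_lt_card hsub) ψ hψ
    (fun T' hT' => hcut T' (hT'.trans hsub.subset)) rfl
  have hvol : ∑ i, deg W i * φ i = m * vol W T + ∑ i, deg W i * ψ i := by
    conv_lhs => rw [hφ_eq]
    simp only [mul_add, Finset.sum_add_distrib, mul_ite, mul_zero, Finset.sum_ite_mem,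
      Finset.univ_inter, vol, Finset.sum_mul, mul_comm m]
  calc 2 * c * ∑ i, deg W i * φ i
      = m * (2 * (c * vol W T)) + 2 * c * ∑ i, deg W i * ψ i := by rw [hvol]; ring
    _ ≤ m * (2 * cut W T) + ∑ i, ∑ j, W i j * |ψ i - ψ j| := by
        gcongr
        exact hcut T subset_rfl
    _ = ∑ i, ∑ j, W i j * |φ i - φ j| := by
        conv_rhs => rw [hφ_eq]
        rw [sum_sum_mul_abs_sub_ite_add hsymm T hm.le hψ hψT]
        ring

lemma sum_sum_mul_abs_sq_sub_sq_sq_le (hsymm : W.IsSymm) (hw : ∀ i j, 0 ≤ W i j)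
    (g : Fin n → ℝ) :
    (∑ i, ∑ j, W i j * |g i ^ 2 - g j ^ 2|) ^ 2
      ≤ 8 * (g ⬝ᵥ (lap W *ᵥ g)) * ∑ i, deg W i * g i ^ 2 := by
  have hcs := Finset.sum_sq_le_sum_mul_sum_of_sq_le_mul (univ : Finset (Fin n × Fin n))
    (r := fun p => W p.1 p.2 * |g p.1 ^ 2 - g p.2 ^ 2|)
    (f := fun p => W p.1 p.2 * (g p.1 - g p.2) ^ 2) (g := fun p => W p.1 p.2 * (g p.1 + g p.2) ^ 2)
    (fun p _ => mul_nonneg (hw _ _) (sq_nonneg _)) (fun p _ => mul_nonneg (hw _ _) (sq_nonneg _))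
    (fun p _ => le_of_eq (by rw [mul_pow, sq_abs]; ring))
  simp only [Fintype.sum_prod_type] at hcs
  have hplus : ∑ i, ∑ j, W i j * (g i + g j) ^ 2 ≤ 4 * ∑ i, deg W i * g i ^ 2 := by
    have hleft : ∑ i, ∑ j, W i j * g i ^ 2 = ∑ i, deg W i * g i ^ 2 := by
      simp only [deg, Finset.sum_mul]
    calc ∑ i, ∑ j, W i j * (g i + g j) ^ 2
        ≤ ∑ i, ∑ j, (2 * (W i j * g i ^ 2) + 2 * (W i j * g j ^ 2)) :=
          Finset.sum_le_sum fun i _ => Finset.sum_le_sum fun j _ => by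
            nlinarith [mul_nonneg (hw i j) (sq_nonneg (g i - g j))]
      _ = 4 * ∑ i, deg W i * g i ^ 2 := by
          simp only [Finset.sum_add_distrib, ← Finset.mul_sum, hleft,
            sum_sum_mul_eq_sum_deg_mul hsymm]
          ring
  rw [← two_mul_dotProduct_lap_mulVec_self hsymm] at hcs
  have hq := dotProduct_lap_mulVec_nonneg hsymm hw g
  nlinarith

lemma dotProduct_lap_mulVec_posPart_le (hw : ∀ i j, 0 ≤ W i j) {f : Fin n → ℝ} {e : ℝ}
    (hf : lap W *ᵥ f = e • f) : f⁺ ⬝ᵥ (lap W *ᵥ f⁺) ≤ e * (f⁺ ⬝ᵥ f⁺) := by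
  have hdisj : ∀ i, f⁺ i * f⁻ i = 0 := fun i => by
    rcases le_total (f i) 0 with h | h <;> simp [h]
  have hcross : f⁺ ⬝ᵥ (lap W *ᵥ f⁻) ≤ 0 :=
    dotProduct_lap_mulVec_nonpos_of_mul_eq_zero hw (fun i => posPart_nonneg (f i))
      (fun i => negPart_nonneg (f i)) hdisj
  have hdot : f⁺ ⬝ᵥ f⁻ = 0 := Finset.sum_eq_zero fun i _ => hdisj i
  calc f⁺ ⬝ᵥ (lap W *ᵥ f⁺) ≤ f⁺ ⬝ᵥ (lap W *ᵥ f⁺) - f⁺ ⬝ᵥ (lap W *ᵥ f⁻) := by linarith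
    _ = f⁺ ⬝ᵥ (lap W *ᵥ (f⁺ - f⁻)) := by rw [mulVec_sub, dotProduct_sub]
    _ = e * (f⁺ ⬝ᵥ (f⁺ - f⁻)) := by rw [posPart_sub_negPart, hf, dotProduct_smul, smul_eq_mul]
    _ = e * (f⁺ ⬝ᵥ f⁺) := by rw [dotProduct_sub, hdot, sub_zero]

lemma sq_mul_sum_deg_mul_sq_le (hsymm : W.IsSymm) (hw : ∀ i j, 0 ≤ W i j) {c : ℝ} (hc : 0 ≤ c)
    {g : Fin n → ℝ} (hg : ∀ i, 0 ≤ g i)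
    (hcut : ∀ T ⊆ univ.filter (0 < g ·), c * vol W T ≤ cut W T) :
    c ^ 2 * ∑ i, deg W i * g i ^ 2 ≤ 2 * (g ⬝ᵥ (lap W *ᵥ g)) := by
  have hsupp : univ.filter (0 < g · ^ 2) = univ.filter (0 < g ·) := by
    ext i; simp [sq_pos_iff, (hg i).lt_iff_ne']
  have hcoarea := two_mul_sum_deg_mul_le_sum_sum_mul_abs_sub hsymm (fun i => g i ^ 2)
    (fun i => sq_nonneg _) (hsupp ▸ hcut)
  have hcs := sum_sum_mul_abs_sq_sub_sq_sq_le hsymm hw g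
  have hq := dotProduct_lap_mulVec_nonneg hsymm hw g
  set S := ∑ i, deg W i * g i ^ 2
  rcases (Finset.sum_nonneg fun i _ => mul_nonneg (deg_nonneg hw i) (sq_nonneg (g i)) :
    0 ≤ S).eq_or_lt with hS | hS
  · rw [show S = 0 from hS.symm, mul_zero]; linarith
  have h := (pow_le_pow_left₀ (by positivity) hcoarea 2).trans hcs
  refine le_of_mul_le_mul_right ?_ (by positivity : 0 < 4 * S)
  nlinarith

lemma cheeger_mul_vol_le_cut_of_subset (hw : ∀ i j, 0 ≤ W i j) {f : Fin n → ℝ} {b : Fin n}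
    (hb : f b < 0) (hvol : vol W (univ.filter (0 < f ·)) ≤ vol W (univ.filter (f · < 0)))
    {T : Finset (Fin n)} (hT : T ⊆ univ.filter (0 < f ·)) : cheeger W * vol W T ≤ cut W T := by
  refine cheeger_mul_vol_le_cut hw (fun h => ?_) ?_
  · have := (Finset.mem_filter.mp (hT (h ▸ Finset.mem_univ b))).2
    linarith
  calc vol W T ≤ vol W (univ.filter (0 < f ·)) := vol_mono hw hT
    _ ≤ vol W (univ.filter (f · < 0)) := hvol
    _ ≤ vol W Tᶜ := vol_mono hw fun i hi => Finset.mem_compl.mpr fun hiT => by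
        have := (Finset.mem_filter.mp (hT hiT)).2
        linarith [(Finset.mem_filter.mp hi).2]

lemma iInf_deg_mul_cheeger_sq_le (hsymm : W.IsSymm) (hw : ∀ i j, 0 ≤ W i j) {f : Fin n → ℝ}
    (hf0 : f ≠ 0) (hsum : ∑ i, f i = 0) {e : ℝ} (hf : lap W *ᵥ f = e • f) :
    (⨅ i, deg W i) * cheeger W ^ 2 ≤ 2 * e := by
  wlog hvol : vol W (univ.filter (0 < f ·)) ≤ vol W (univ.filter (f · < 0)) generalizing f
  · refine this (neg_ne_zero.mpr hf0) (by simp [hsum]) (by rw [mulVec_neg, hf, smul_neg]) ?_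
    simpa using (not_le.mp hvol).le
  have hex : ∃ i ∈ univ, f i ≠ 0 := by simpa [funext_iff] using hf0
  obtain ⟨a, -, ha⟩ := Finset.exists_pos_of_sum_zero_of_exists_nonzero f hsum hex
  obtain ⟨b, -, hb⟩ := Finset.exists_pos_of_sum_zero_of_exists_nonzero (s := univ) (-f)
    (by simp [hsum]) (by simpa using hex)
  rw [Pi.neg_apply, neg_pos] at hb
  have hcut : ∀ T ⊆ univ.filter (0 < f⁺ ·), cheeger W * vol W T ≤ cut W T := fun T hT =>
    cheeger_mul_vol_le_cut_of_subset hw hb hvol (by simpa only [Pi.posPart_apply,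
      posPart_pos_iff] using hT)
  have hsweep := sq_mul_sum_deg_mul_sq_le hsymm hw (cheeger_nonneg hw)
    (fun i => posPart_nonneg (f i)) hcut
  have hq := dotProduct_lap_mulVec_posPart_le hw hf
  have hG : 0 < f⁺ ⬝ᵥ f⁺ := Finset.sum_pos' (fun i _ => mul_self_nonneg _)
    ⟨a, Finset.mem_univ a, mul_self_pos.mpr (by simpa using ha)⟩
  have hS : (⨅ i, deg W i) * (f⁺ ⬝ᵥ f⁺) ≤ ∑ i, deg W i * f⁺ i ^ 2 := by
    rw [dotProduct, Finset.mul_sum]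
    exact Finset.sum_le_sum fun i _ => by
      rw [← sq]
      exact mul_le_mul_of_nonneg_right (ciInf_le (Set.finite_range _).bddBelow i) (sq_nonneg _)
  refine le_of_mul_le_mul_right ?_ hG
  calc (⨅ i, deg W i) * cheeger W ^ 2 * (f⁺ ⬝ᵥ f⁺)
      = cheeger W ^ 2 * ((⨅ i, deg W i) * (f⁺ ⬝ᵥ f⁺)) := by ring
    _ ≤ cheeger W ^ 2 * ∑ i, deg W i * f⁺ i ^ 2 := by gcongr
    _ ≤ 2 * (f⁺ ⬝ᵥ (lap W *ᵥ f⁺)) := hsweep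
    _ ≤ 2 * e * (f⁺ ⬝ᵥ f⁺) := by linarith

end Graph

/-- Lemma 3, Cheeger bounds: the spectral gap of the combinatorial
Laplacian satisfies `(1/2) d_min h_G² ≤ λ₂(L) ≤ 2 d_max h_G`.
Here `μ` lists the eigenvalues of `L` with multiplicity in increasing order. -/
theorem stmt_13 {n : ℕ} (hn : 2 ≤ n) (wbar : ℝ)
    (W : Matrix (Fin n) (Fin n) ℝ)
    (hsymm : W.IsSymm)
    (hW : ∀ i j, 0 ≤ W i j ∧ W i j ≤ wbar)
    (hL : (lap W).IsHermitian)
    (μ : Fin n → ℝ) (hmono : Monotone μ)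
    (hperm : ∃ σ : Equiv.Perm (Fin n), hL.eigenvalues = μ ∘ σ) :
    (1 / 2) * (⨅ i, deg W i) * cheeger W ^ 2 ≤ μ ⟨1, by omega⟩ ∧
      μ ⟨1, by omega⟩ ≤ 2 * (⨆ i, deg W i) * cheeger W := by
  obtain ⟨σ, hσ⟩ := hperm
  have hw : ∀ i j, 0 ≤ W i j := fun i j => (hW i j).1
  have hpsd := dotProduct_lap_mulVec_nonneg hsymm hw
  set k₀ := σ.symm ⟨0, by omega⟩
  set k₁ := σ.symm ⟨1, hn⟩
  have heig : ∀ k, hL.eigenvalues k = μ (σ k) := fun k => congrFun hσ k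
  have hk₁ : hL.eigenvalues k₁ = μ ⟨1, hn⟩ := by simp [heig, k₁]
  have hge : ∀ k ≠ k₀, μ ⟨1, hn⟩ ≤ hL.eigenvalues k := fun k hk => by
    have : (σ k).val ≠ 0 := fun h => hk (σ.eq_symm_apply.mpr (Fin.ext h))
    exact heig k ▸ hmono (Fin.mk_le_of_le_val (by omega))
  have hne : k₀ ≠ k₁ := σ.symm.injective.ne (by simp [Fin.ext_iff])
  have hle : hL.eigenvalues k₀ ≤ hL.eigenvalues k₁ := by
    simp only [heig, k₀, k₁, Equiv.apply_symm_apply]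
    exact hmono (Fin.mk_le_mk.mpr zero_le_one)
  constructor
  · obtain ⟨f, hf0, hfsum, hf⟩ :=
      hL.exists_sum_eq_zero_and_mulVec_eq_smul lap_mulVec_one hpsd hne hle
    rw [hk₁] at hf
    linarith [iInf_deg_mul_cheeger_sq_le hsymm hw hf0 hfsum hf]
  · exact le_two_mul_iSup_deg_mul_cheeger hsymm hw hn fun x hx =>
      hL.le_dotProduct_mulVec_of_sum_eq_zero lap_mulVec_one hpsd hge hx
end
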